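/- Let G be a non-amenable countable group and (Y,G) a minimal system such that: (a) there exists a minimal Cantor system (X,G) with no invariant probability measures which is an almost one-to-one extension of (Y,G); and (b) there exists a minimal subshift (Z,G) which is an almost one-to-one extension of (Y,G). Then there exists a minimal subshift (Z̃,G) with no invariant probability measures which is an almost one-to-one extension of (Y,G). -/

import Mathlib

open MeasureTheory

/-- The shift action of `G` on `G → A`: `(g • y)(h) = y(g⁻¹h)`. -/
def shiftAct {G A : Type*} [Group G] (g : G) (y : G → A) : G → A :=
  fun h => y (g⁻¹ * h)

/-- Amenability of a countable group, characterized dynamically: every continuous action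
on a nonempty compact metric space carries an invariant Borel probability measure. -/
def HasInvariantMeasuresAll (G : Type*) [Group G] : Prop :=
  ∀ (X : Type) [MetricSpace X] [CompactSpace X] [Nonempty X]
    [MeasurableSpace X] [BorelSpace X] (act : G → X → X),
    (∀ g : G, Continuous (act g)) → act 1 = id →
    (∀ g h : G, act (g * h) = act g ∘ act h) →
    ∃ μ : Measure X, IsProbabilityMeasure μ ∧ ∀ g : G, Measure.map (act g) μ = μ

open Set Filter TopologicalSpace
open scoped ENNReal NNReal Topology

section ShiftBasics

variable {G A : Type*} [Group G]

lemma shiftAct_one (y : G → A) : shiftAct (1 : G) y = y := by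
  funext h; simp [shiftAct]

lemma shiftAct_mul (g h : G) (y : G → A) :
    shiftAct (g * h) y = shiftAct g (shiftAct h y) := by
  funext t; simp [shiftAct, mul_assoc]

lemma continuous_shiftAct [TopologicalSpace A] (g : G) :
    Continuous (shiftAct g : (G → A) → (G → A)) :=
  continuous_pi fun h => continuous_apply (g⁻¹ * h)

lemma measurable_shiftAct [MeasurableSpace A] (g : G) :
    Measurable (shiftAct g : (G → A) → (G → A)) :=
  measurable_pi_lambda _ fun h => measurable_pi_apply (g⁻¹ * h)

end ShiftBasics

/-- Existence of a minimal closed invariant subset, by Zorn's lemma. -/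
lemma exists_minimal_closed_invariant {T : Type*} [TopologicalSpace T] [CompactSpace T]
    {G : Type*} [Group G] (S : G → T → T) (A : Set T) (hA : IsClosed A)
    (hne : A.Nonempty) (hinv : ∀ g, ∀ p ∈ A, S g p ∈ A) :
    ∃ M ⊆ A, IsClosed M ∧ M.Nonempty ∧ (∀ g, ∀ p ∈ M, S g p ∈ M) ∧
      (∀ B ⊆ M, IsClosed B → B.Nonempty → (∀ g, ∀ p ∈ B, S g p ∈ B) → B = M) := by
  set 𝒮 : Set (Set T) :=
    {B | B ⊆ A ∧ IsClosed B ∧ B.Nonempty ∧ ∀ g, ∀ p ∈ B, S g p ∈ B} with h𝒮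
  have hzorn := zorn_superset_nonempty 𝒮 ?_ A ⟨subset_rfl, hA, hne, hinv⟩
  · obtain ⟨M, hMA, hMmem, hMmin⟩ := hzorn
    refine ⟨M, hMA, hMmem.2.1, hMmem.2.2.1, hMmem.2.2.2, ?_⟩
    intro B hBM hBc hBne hBinv
    have : B ∈ 𝒮 := ⟨hBM.trans hMA, hBc, hBne, hBinv⟩
    exact le_antisymm hBM (hMmin this hBM)
  · intro c hc hchain hcne
    refine ⟨⋂₀ c, ?_, fun s hs => Set.sInter_subset_of_mem hs⟩
    obtain ⟨s₀, hs₀⟩ := hcne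
    have hs₀S := hc hs₀
    constructor
    · exact (Set.sInter_subset_of_mem hs₀).trans hs₀S.1
    refine ⟨isClosed_sInter fun s hs => (hc hs).2.1, ?_, ?_⟩
    · -- nonempty, by compactness
      haveI : Nonempty c := Set.nonempty_coe_sort.mpr ⟨s₀, hs₀⟩
      rw [Set.sInter_eq_iInter]
      apply IsCompact.nonempty_iInter_of_directed_nonempty_isCompact_isClosed
        (fun s : c => (s : Set T))
      · intro a b
        rcases eq_or_ne a b with rfl | hab
        · exact ⟨a, subset_rfl, subset_rfl⟩
        rcases hchain a.2 b.2 (fun h => hab (Subtype.ext h)) with h | h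
        · exact ⟨a, subset_rfl, h⟩
        · exact ⟨b, h, subset_rfl⟩
      · exact fun s => (hc s.2).2.2.1
      · exact fun s => ((hc s.2).2.1).isCompact
      · exact fun s => (hc s.2).2.1
    · intro g p hp
      exact fun s hs => (hc hs).2.2.2 g p (hp s hs)

/-- The set of points with a unique preimage (in a compact set) is a Gδ set. -/
lemma isGδ_unique_preimage {α Y' : Type*} [TopologicalSpace α]
    [TopologicalSpace.MetrizableSpace α] [TopologicalSpace Y'] [T2Space Y']
    {K : Set α} (hK : IsCompact K) {f : α → Y'} (hf : ContinuousOn f K)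
    (hs : ∀ y, ∃ a ∈ K, f a = y) :
    IsGδ {y | ∃! a, a ∈ K ∧ f a = y} := by
  letI : MetricSpace α := TopologicalSpace.metrizableSpaceMetric α
  have hset : {y | ∃! a, a ∈ K ∧ f a = y} =
      ⋂ n : ℕ, {y | ∀ a ∈ K, ∀ b ∈ K, f a = y → f b = y → dist a b < 1 / (n + 1)} := by
    ext y
    simp only [Set.mem_iInter, Set.mem_setOf_eq]
    constructor
    · rintro ⟨a, ⟨haK, hay⟩, hau⟩ n p hp q hq hpy hqy
      have : p = q := by
        rw [hau p ⟨hp, hpy⟩, hau q ⟨hq, hqy⟩]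
      rw [this, dist_self]
      positivity
    · intro h
      obtain ⟨a, haK, hay⟩ := hs y
      refine ⟨a, ⟨haK, hay⟩, ?_⟩
      rintro b ⟨hbK, hby⟩
      have hd : dist b a ≤ 0 := by
        by_contra hd
        push_neg at hd
        obtain ⟨n, hn⟩ := exists_nat_one_div_lt hd
        exact absurd (h n b hbK a haK hby hay) (by exact_mod_cast not_lt.mpr hn.le)
      exact dist_le_zero.mp hd
  rw [hset]
  refine IsGδ.iInter_of_isOpen fun n => ?_
  rw [← isClosed_compl_iff]
  have himg : {y | ∀ a ∈ K, ∀ b ∈ K, f a = y → f b = y → dist a b < 1 / (n + 1)}ᶜ =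
      (fun q : α × α => f q.1) ''
        {q : α × α | q.1 ∈ K ∧ q.2 ∈ K ∧ f q.1 = f q.2 ∧ 1 / (n + 1 : ℝ) ≤ dist q.1 q.2} := by
    ext y
    simp only [Set.mem_compl_iff, Set.mem_setOf_eq, Set.mem_image, not_forall]
    constructor
    · rintro ⟨a, haK, b, hbK, hay, hby, hab⟩
      exact ⟨(a, b), ⟨haK, hbK, by rw [hay, hby], not_lt.mp hab⟩, hay⟩
    · rintro ⟨⟨a, b⟩, ⟨haK, hbK, hfab, hd⟩, rfl⟩
      exact ⟨a, haK, b, hbK, rfl, hfab.symm, not_lt.mpr hd⟩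
  rw [himg]
  have hQc : IsCompact {q : α × α | q.1 ∈ K ∧ q.2 ∈ K ∧ f q.1 = f q.2 ∧
      1 / (n + 1 : ℝ) ≤ dist q.1 q.2} := by
    have hKK : IsCompact (K ×ˢ K) := hK.prod hK
    refine hKK.of_isClosed_subset ?_ ?_
    · have h1 : IsClosed ((K ×ˢ K) ∩
          (fun q : α × α => (f q.1, f q.2)) ⁻¹' (Set.diagonal Y')) := by
        refine ContinuousOn.preimage_isClosed_of_isClosed ?_
          (hK.isClosed.prod hK.isClosed) isClosed_diagonal
        exact ((hf.comp continuous_fst.continuousOn fun q hq => hq.1).prodMk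
          (hf.comp continuous_snd.continuousOn fun q hq => hq.2))
      have h2 : IsClosed {q : α × α | 1 / (n + 1 : ℝ) ≤ dist q.1 q.2} :=
        isClosed_le continuous_const (continuous_dist.comp
          (continuous_fst.prodMk continuous_snd))
      have : {q : α × α | q.1 ∈ K ∧ q.2 ∈ K ∧ f q.1 = f q.2 ∧
          1 / (n + 1 : ℝ) ≤ dist q.1 q.2} = ((K ×ˢ K) ∩
          (fun q : α × α => (f q.1, f q.2)) ⁻¹' (Set.diagonal Y')) ∩
          {q : α × α | 1 / (n + 1 : ℝ) ≤ dist q.1 q.2} := by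
        ext q
        simp only [Set.mem_setOf_eq, Set.mem_inter_iff, Set.mem_prod, Set.mem_preimage,
          Set.mem_diagonal_iff]
        tauto
      rw [this]
      exact (h1.inter h2)
    · rintro q ⟨h1, h2, -, -⟩; exact ⟨h1, h2⟩
  have : ContinuousOn (fun q : α × α => f q.1) {q : α × α | q.1 ∈ K ∧ q.2 ∈ K ∧
      f q.1 = f q.2 ∧ 1 / (n + 1 : ℝ) ≤ dist q.1 q.2} :=
    hf.comp continuous_fst.continuousOn fun q hq => hq.1
  exact (hQc.image_of_continuousOn this).isClosed

/-- A continuous coloring of `α` that refines a given base coloring `z0`. -/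
structure Col {α : Type*} [TopologicalSpace α] (k : ℕ) (z0 : α → Fin (k + 1)) where
  m : ℕ
  f : α → Fin (m + 1)
  cont : Continuous f
  r : Fin (m + 1) → Fin (k + 1)
  hr : ∀ p, z0 p = r (f p)

namespace Col

variable {α : Type*} [TopologicalSpace α] {k : ℕ} {z0 : α → Fin (k + 1)}

instance : Preorder (Col k z0) where
  le c d := ∃ u : Fin (d.m + 1) → Fin (c.m + 1), c.f = u ∘ d.f
  le_refl c := ⟨id, rfl⟩
  le_trans c d e := by
    rintro ⟨u, hu⟩ ⟨v, hv⟩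
    exact ⟨u ∘ v, by rw [hu, hv]; rfl⟩

lemma size_eq (c : Col k z0) {n : ℕ} : (c.m + 1) * (n + 1) = c.m * n + c.m + n + 1 := by ring

/-- Refine a coloring by an extra continuous coordinate. -/
def add (c : Col k z0) {n : ℕ} (d : α → Fin (n + 1)) (hd : Continuous d) : Col k z0 where
  m := c.m * n + c.m + n
  f := fun p => finCongr c.size_eq (finProdFinEquiv (c.f p, d p))
  cont := by
    apply Continuous.comp continuous_of_discreteTopology
    exact Continuous.comp continuous_of_discreteTopology (c.cont.prodMk hd)
  r := fun i => c.r (finProdFinEquiv.symm ((finCongr c.size_eq).symm i)).1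
  hr := by
    intro p
    simp only [Equiv.symm_apply_apply]
    exact c.hr p

lemma add_f_eq_iff (c : Col k z0) {n : ℕ} (d : α → Fin (n + 1)) (hd : Continuous d)
    {p q : α} : (c.add d hd).f p = (c.add d hd).f q ↔ c.f p = c.f q ∧ d p = d q := by
  constructor
  · intro h
    simp only [add] at h
    have h2 := finProdFinEquiv.injective ((finCongr c.size_eq).injective h)
    exact ⟨congrArg Prod.fst h2, congrArg Prod.snd h2⟩
  · rintro ⟨h1, h2⟩
    simp only [add, h1, h2]

lemma le_add (c : Col k z0) {n : ℕ} (d : α → Fin (n + 1)) (hd : Continuous d) :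
    c ≤ c.add d hd := by
  refine ⟨fun i => (finProdFinEquiv.symm ((finCongr c.size_eq).symm i)).1, ?_⟩
  funext p
  simp only [add, Function.comp_apply, Equiv.symm_apply_apply]

instance : IsDirected (Col k z0) (· ≤ ·) := by
  constructor
  intro c d
  exact ⟨c.add d.f d.cont, c.le_add d.f d.cont,
    ⟨fun i => (finProdFinEquiv.symm ((finCongr c.size_eq).symm i)).2, by
      funext p
      simp only [add, Function.comp_apply, Equiv.symm_apply_apply]⟩⟩

/-- `c` refines a set `A` if `A` is a union of fibers of `c.f`. -/
def Refines (c : Col k z0) (A : Set α) : Prop := c.f ⁻¹' (c.f '' A) = A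

lemma Refines.mono {c d : Col k z0} (h : c ≤ d) {A : Set α} (hc : c.Refines A) :
    d.Refines A := by
  obtain ⟨u, hu⟩ := h
  apply Set.Subset.antisymm
  · rintro p ⟨q, hqA, hq⟩
    rw [← hc]
    exact ⟨q, hqA, by rw [hu]; exact congrArg u hq⟩
  · exact Set.subset_preimage_image _ _

lemma Refines.mem_iff {c : Col k z0} {A : Set α} (hc : c.Refines A) {p : α} :
    c.f p ∈ c.f '' A ↔ p ∈ A := by
  constructor
  · intro h
    have hp : p ∈ c.f ⁻¹' (c.f '' A) := h
    rwa [hc] at hp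
  · exact fun h => Set.mem_image_of_mem _ h

lemma exists_refines (hz0 : Continuous z0) {A : Set α} (hA : IsClopen A) :
    ∃ c : Col k z0, ∀ d, c ≤ d → d.Refines A := by
  classical
  set base : Col k z0 := ⟨k, z0, hz0, id, fun _ => rfl⟩ with hbase
  set ind : α → Fin 2 := fun p => if p ∈ A then 0 else 1 with hind
  have hindc : Continuous ind := by
    rw [continuous_discrete_rng]
    intro b
    match b with
    | 0 =>
      have : ind ⁻¹' {0} = A := by
        ext p; by_cases hp : p ∈ A <;> simp [hind, hp]
      rw [this]; exact hA.2
    | 1 =>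
      have : ind ⁻¹' {1} = Aᶜ := by
        ext p; by_cases hp : p ∈ A <;> simp [hind, hp]
      rw [this]; exact hA.1.isOpen_compl
  refine ⟨base.add ind hindc, fun d hd => Refines.mono hd ?_⟩
  apply Set.Subset.antisymm
  · rintro p ⟨q, hqA, hq⟩
    have := ((base.add_f_eq_iff ind hindc).mp hq).2
    by_contra hp
    rw [hind] at this
    simp only [if_pos hqA, if_neg hp] at this
    exact absurd this (by decide)
  · exact Set.subset_preimage_image _ _

end Col

/-- separation of a compact set from a disjoint closed set by a clopen set -/
lemma exists_isClopen_separating {α : Type*} [TopologicalSpace α] [CompactSpace α] [T2Space α]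
    [TotallyDisconnectedSpace α] {K L : Set α} (hK : IsCompact K) (hL : IsClosed L)
    (h : Disjoint K L) : ∃ C : Set α, IsClopen C ∧ K ⊆ C ∧ Disjoint C L := by
  classical
  have hmem : ∀ x ∈ K, ∃ V : Set α, IsClopen V ∧ x ∈ V ∧ V ⊆ Lᶜ := by
    intro x hx
    exact compact_exists_isClopen_in_isOpen hL.isOpen_compl
      (Set.disjoint_left.mp h hx)
  choose! V hV1 hV2 hV3 using hmem
  obtain ⟨t, htK, htcov⟩ := hK.elim_nhds_subcover V fun x hx => (hV1 x hx).isOpen.mem_nhds (hV2 x hx)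
  refine ⟨⋃ x ∈ t, V x, ?_, htcov, ?_⟩
  · exact Set.Finite.isClopen_biUnion t.finite_toSet fun x hx => hV1 x (htK x hx)
  · rw [Set.disjoint_left]
    rintro p hp hpL
    simp only [Set.mem_iUnion] at hp
    obtain ⟨x, hxt, hpx⟩ := hp
    exact hV3 x (htK x hxt) hpx hpL

theorem exists_col_no_invariant_measure
    {G α : Type*} [Group G] [Countable G] [TopologicalSpace α] [CompactSpace α] [T2Space α]
    [TotallyDisconnectedSpace α] [SecondCountableTopology α]
    [MeasurableSpace α] [BorelSpace α] [Nonempty α]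
    (S : G → α → α) (hSc : ∀ g, Continuous (S g)) (hS1 : ∀ p, S (1 : G) p = p)
    (hSm : ∀ g h p, S (g * h) p = S g (S h p))
    (k : ℕ) (z0 : α → Fin (k + 1)) (hz0 : Continuous z0)
    (hno : ¬ ∃ μ : Measure α, IsProbabilityMeasure μ ∧ ∀ g : G, Measure.map (S g) μ = μ) :
    ∃ c : Col k z0, ¬ ∃ μ : Measure (G → Fin (c.m + 1)), IsProbabilityMeasure μ ∧
      μ (Set.range fun p (h : G) => c.f (S h⁻¹ p)) = 1 ∧
      ∀ g : G, Measure.map (shiftAct g) μ = μ := by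
  classical
  by_contra hcon
  push_neg at hcon
  choose μ hμprob hμfull hμinv using hcon
  haveI : Nonempty (Col k z0) := ⟨⟨k, z0, hz0, id, fun _ => rfl⟩⟩
  set U : Ultrafilter (Col k z0) := Ultrafilter.of Filter.atTop with hUdef
  have hUatTop : ∀ {s : Set (Col k z0)}, s ∈ (Filter.atTop : Filter (Col k z0)) →
      s ∈ (U : Filter (Col k z0)) := fun hs => Ultrafilter.of_le _ hs
  -- basic facts about the action
  have himg : ∀ (g : G) (A : Set α), S g '' A = S g⁻¹ ⁻¹' A := by
    intro g A
    ext p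
    constructor
    · rintro ⟨q, hq, rfl⟩
      show S g⁻¹ (S g q) ∈ A
      rw [← hSm, inv_mul_cancel, hS1]; exact hq
    · intro hp
      exact ⟨S g⁻¹ p, hp, by rw [← hSm, mul_inv_cancel, hS1]⟩
  have hSclopen : ∀ (g : G) {A : Set α}, IsClopen A → IsClopen (S g '' A) := by
    intro g A hA
    rw [himg]
    exact hA.preimage (hSc g⁻¹)
  -- facts about the coding maps
  have hΦcont : ∀ c : Col k z0, Continuous (fun p (h : G) => c.f (S h⁻¹ p)) :=
    fun c => continuous_pi fun h => c.cont.comp (hSc h⁻¹)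
  have hΦa : ∀ (c : Col k z0) (p : α) (g : G),
      (fun (p : α) (h : G) => c.f (S h⁻¹ p)) p g = c.f (S g⁻¹ p) := fun _ _ _ => rfl
  have hΦ1 : ∀ (c : Col k z0) (p : α), (fun (p : α) (h : G) => c.f (S h⁻¹ p)) p 1 = c.f p := by
    intro c p
    simp only [inv_one, hS1]
  have hWmeas : ∀ c : Col k z0,
      MeasurableSet (Set.range fun p (h : G) => c.f (S h⁻¹ p)) :=
    fun c => ((isCompact_range (hΦcont c)).isClosed).measurableSet
  have hWcompl : ∀ c : Col k z0, μ c (Set.range fun p (h : G) => c.f (S h⁻¹ p))ᶜ = 0 :=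
    fun c => (prob_compl_eq_zero_iff (hWmeas c)).mpr (hμfull c)
  have hIW : ∀ (c : Col k z0) (s : Set (G → Fin (c.m + 1))),
      μ c (s ∩ Set.range fun p (h : G) => c.f (S h⁻¹ p)) = μ c s :=
    fun c s => measure_inter_conull (hWcompl c)
  have hcylmeas : ∀ (c : Col k z0) (g : G) (T : Set (Fin (c.m + 1))),
      MeasurableSet {w : G → Fin (c.m + 1) | w g ∈ T} :=
    fun c g T => measurable_pi_apply g (MeasurableSpace.measurableSet_top)
  have hshift : ∀ (c : Col k z0) (g : G) (T : Set (Fin (c.m + 1))),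
      μ c {w : G → Fin (c.m + 1) | w g ∈ T} = μ c {w : G → Fin (c.m + 1) | w 1 ∈ T} := by
    intro c g T
    have hset : {w : G → Fin (c.m + 1) | w g ∈ T} =
        shiftAct g⁻¹ ⁻¹' {w : G → Fin (c.m + 1) | w 1 ∈ T} := by
      ext w
      simp [shiftAct]
    rw [hset, ← Measure.map_apply (measurable_shiftAct g⁻¹) (hcylmeas c 1 T), hμinv c g⁻¹]
  -- the limit values along the ultrafilter
  have hlim : ∀ A : Set α, ∃ l : ℝ≥0∞, Filter.Tendsto
      (fun c : Col k z0 => μ c {w : G → Fin (c.m + 1) | w 1 ∈ c.f '' A})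
      (U : Filter (Col k z0)) (𝓝 l) := by
    intro A
    obtain ⟨x, -, hx⟩ := (isCompact_univ (X := ℝ≥0∞)).ultrafilter_le_nhds
      (U.map fun c : Col k z0 => μ c {w : G → Fin (c.m + 1) | w 1 ∈ c.f '' A}) (by simp)
    exact ⟨x, hx⟩
  choose ν hν using hlim
  have hev : ∀ {A : Set α}, IsClopen A →
      {c : Col k z0 | c.Refines A} ∈ (U : Filter (Col k z0)) := by
    intro A hA
    obtain ⟨c₀, hc₀⟩ := Col.exists_refines hz0 hA
    exact hUatTop (Filter.mem_of_superset (Filter.Ici_mem_atTop c₀) fun d hd => hc₀ d hd)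
  -- basic properties of ν
  have hν_le1 : ∀ A : Set α, ν A ≤ 1 :=
    fun A => le_of_tendsto (hν A) (Filter.Eventually.of_forall fun c => prob_le_one)
  have hν_mono : ∀ {A B : Set α}, A ⊆ B → ν A ≤ ν B := by
    intro A B hAB
    exact le_of_tendsto_of_tendsto' (hν A) (hν B) fun c =>
      measure_mono fun w hw => Set.image_mono hAB hw
  have hν_univ : ν Set.univ = 1 := by
    have hval : ∀ c : Col k z0,
        μ c {w : G → Fin (c.m + 1) | w 1 ∈ c.f '' Set.univ} = 1 := by
      intro c
      refine le_antisymm prob_le_one ?_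
      calc (1 : ℝ≥0∞) = μ c (Set.range fun p (h : G) => c.f (S h⁻¹ p)) := (hμfull c).symm
        _ ≤ _ := measure_mono (by
          rintro w ⟨p, rfl⟩
          exact Set.mem_setOf.mpr (by rw [hΦ1 c p]; exact ⟨p, trivial, rfl⟩))
    exact tendsto_nhds_unique (hν _)
      (Filter.Tendsto.congr (fun c => (hval c).symm) tendsto_const_nhds)
  have hν_add : ∀ {A B : Set α}, IsClopen A → IsClopen B → Disjoint A B →
      ν (A ∪ B) = ν A + ν B := by
    intro A B hA hB hAB
    have key : ∀ c : Col k z0, c.Refines A → c.Refines B →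
        μ c {w : G → Fin (c.m + 1) | w 1 ∈ c.f '' (A ∪ B)} =
        μ c {w : G → Fin (c.m + 1) | w 1 ∈ c.f '' A} +
        μ c {w : G → Fin (c.m + 1) | w 1 ∈ c.f '' B} := by
      intro c hcA hcB
      have hsplit : {w : G → Fin (c.m + 1) | w 1 ∈ c.f '' (A ∪ B)} =
          {w : G → Fin (c.m + 1) | w 1 ∈ c.f '' A} ∪
          {w : G → Fin (c.m + 1) | w 1 ∈ c.f '' B} := by
        ext w
        simp [Set.image_union]
      have hnull : μ c ({w : G → Fin (c.m + 1) | w 1 ∈ c.f '' A} ∩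
          {w : G → Fin (c.m + 1) | w 1 ∈ c.f '' B}) = 0 := by
        refine measure_mono_null ?_ (hWcompl c)
        rintro w ⟨hwA, hwB⟩ hwW
        obtain ⟨p, rfl⟩ := hwW
        rw [Set.mem_setOf_eq, hΦ1 c p] at hwA hwB
        exact (Set.disjoint_left.mp hAB (hcA.mem_iff.mp hwA)) (hcB.mem_iff.mp hwB)
      have hmui := measure_union_add_inter
        (μ := μ c) {w : G → Fin (c.m + 1) | w 1 ∈ c.f '' A} (hcylmeas c 1 (c.f '' B))
      rw [hnull, add_zero] at hmui
      rw [hsplit, hmui]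
    refine tendsto_nhds_unique (hν _) (Filter.Tendsto.congr' ?_ ((hν A).add (hν B)))
    filter_upwards [hev hA, hev hB] with c hcA hcB
    exact (key c hcA hcB).symm
  have hν_union_le : ∀ A B : Set α, ν (A ∪ B) ≤ ν A + ν B := by
    intro A B
    refine le_of_tendsto_of_tendsto' (hν _) ((hν A).add (hν B)) fun c => ?_
    have hsplit : {w : G → Fin (c.m + 1) | w 1 ∈ c.f '' (A ∪ B)} =
        {w : G → Fin (c.m + 1) | w 1 ∈ c.f '' A} ∪
        {w : G → Fin (c.m + 1) | w 1 ∈ c.f '' B} := by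
      ext w
      simp [Set.image_union]
    rw [hsplit]
    exact measure_union_le _ _
  have hν_inv : ∀ (g : G) {A : Set α}, IsClopen A → ν (S g '' A) = ν A := by
    intro g A hA
    have key : ∀ c : Col k z0, c.Refines A → c.Refines (S g '' A) →
        μ c {w : G → Fin (c.m + 1) | w 1 ∈ c.f '' (S g '' A)} =
        μ c {w : G → Fin (c.m + 1) | w 1 ∈ c.f '' A} := by
      intro c hcA hcgA
      have h2 : {w : G → Fin (c.m + 1) | w 1 ∈ c.f '' (S g '' A)} ∩
          (Set.range fun p (h : G) => c.f (S h⁻¹ p)) =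
          {w : G → Fin (c.m + 1) | w g ∈ c.f '' A} ∩
          (Set.range fun p (h : G) => c.f (S h⁻¹ p)) := by
        ext w
        simp only [Set.mem_inter_iff, Set.mem_setOf_eq, and_congr_left_iff]
        rintro ⟨p, rfl⟩
        rw [hΦ1 c p, hΦa c p g, hcgA.mem_iff, hcA.mem_iff]
        constructor
        · rintro ⟨q, hq, rfl⟩
          rw [← hSm, inv_mul_cancel, hS1]; exact hq
        · intro hp
          exact ⟨S g⁻¹ p, hp, by rw [← hSm, mul_inv_cancel, hS1]⟩
      calc μ c {w : G → Fin (c.m + 1) | w 1 ∈ c.f '' (S g '' A)}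
          = μ c ({w : G → Fin (c.m + 1) | w 1 ∈ c.f '' (S g '' A)} ∩
            (Set.range fun p (h : G) => c.f (S h⁻¹ p))) := (hIW c _).symm
        _ = μ c ({w : G → Fin (c.m + 1) | w g ∈ c.f '' A} ∩
            (Set.range fun p (h : G) => c.f (S h⁻¹ p))) := by rw [h2]
        _ = μ c {w : G → Fin (c.m + 1) | w g ∈ c.f '' A} := hIW c _
        _ = μ c {w : G → Fin (c.m + 1) | w 1 ∈ c.f '' A} := hshift c g _
    refine tendsto_nhds_unique (Filter.Tendsto.congr' ?_ (hν (S g '' A))) (hν A)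
    filter_upwards [hev hA, hev (hSclopen g hA)] with c hcA hcgA
    exact key c hcA hcgA
  -- the content
  set lamE : TopologicalSpace.Compacts α → ℝ≥0∞ :=
    fun K => ⨅ C : {C : Set α // IsClopen C ∧ (K : Set α) ⊆ C}, ν C with hlamEdef
  have hlamE_le : ∀ (K : TopologicalSpace.Compacts α) (C : Set α), IsClopen C →
      (K : Set α) ⊆ C → lamE K ≤ ν C := fun K C hC hKC => iInf_le _ (⟨C, hC, hKC⟩ : {C : Set α // IsClopen C ∧ (K : Set α) ⊆ C})
  have hlamE_le1 : ∀ K, lamE K ≤ 1 := fun K =>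
    (hlamE_le K Set.univ isClopen_univ (Set.subset_univ _)).trans hν_univ.le
  have hlamE_ne_top : ∀ K, lamE K ≠ ⊤ :=
    fun K => ((hlamE_le1 K).trans_lt ENNReal.one_lt_top).ne
  set lam : TopologicalSpace.Compacts α → ℝ≥0 := fun K => (lamE K).toNNReal with hlamdef
  have hcoe : ∀ K, (lam K : ℝ≥0∞) = lamE K := fun K => ENNReal.coe_toNNReal (hlamE_ne_top K)
  have hlamE_clopen : ∀ (C : Set α) (hC : IsClopen C),
      lamE ⟨C, hC.isClosed.isCompact⟩ = ν C := by
    intro C hC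
    refine le_antisymm (hlamE_le _ C hC subset_rfl) (le_iInf ?_)
    rintro ⟨D, hD, hCD⟩
    exact hν_mono hCD
  have hmono : ∀ K₁ K₂ : TopologicalSpace.Compacts α, (K₁ : Set α) ⊆ (K₂ : Set α) →
      lam K₁ ≤ lam K₂ := by
    intro K₁ K₂ h
    rw [← ENNReal.coe_le_coe, hcoe, hcoe]
    refine le_iInf ?_
    rintro ⟨C, hC, hKC⟩
    exact hlamE_le K₁ C hC (h.trans hKC)
  have hsup_le : ∀ K₁ K₂ : TopologicalSpace.Compacts α, lam (K₁ ⊔ K₂) ≤ lam K₁ + lam K₂ := by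
    intro K₁ K₂
    rw [← ENNReal.coe_le_coe, ENNReal.coe_add, hcoe, hcoe, hcoe, hlamEdef]
    rw [ENNReal.iInf_add]
    refine le_iInf ?_
    rintro ⟨C₁, hC₁, hKC₁⟩
    rw [ENNReal.add_iInf]
    refine le_iInf ?_
    rintro ⟨C₂, hC₂, hKC₂⟩
    refine le_trans (hlamE_le _ (C₁ ∪ C₂) (hC₁.union hC₂) ?_) (hν_union_le C₁ C₂)
    simp only [TopologicalSpace.Compacts.coe_sup]
    exact Set.union_subset_union hKC₁ hKC₂
  have hsup_disjoint : ∀ K₁ K₂ : TopologicalSpace.Compacts α, Disjoint (K₁ : Set α) K₂ →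
      IsClosed (K₁ : Set α) → IsClosed (K₂ : Set α) → lam (K₁ ⊔ K₂) = lam K₁ + lam K₂ := by
    intro K₁ K₂ hdisj hcl₁ hcl₂
    refine le_antisymm (hsup_le K₁ K₂) ?_
    obtain ⟨C₀, hC₀, hKC₀, hC₀K₂⟩ := exists_isClopen_separating K₁.2 hcl₂ hdisj
    rw [← ENNReal.coe_le_coe, ENNReal.coe_add, hcoe, hcoe, hcoe]
    refine le_iInf ?_
    rintro ⟨C, hC, hKC⟩
    simp only [TopologicalSpace.Compacts.coe_sup] at hKC
    have h1 : lamE K₁ ≤ ν (C ∩ C₀) :=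
      hlamE_le K₁ _ (hC.inter hC₀) (Set.subset_inter ((Set.subset_union_left).trans hKC) hKC₀)
    have h2 : lamE K₂ ≤ ν (C ∩ C₀ᶜ) := by
      refine hlamE_le K₂ _ (hC.inter hC₀.compl) (Set.subset_inter
        ((Set.subset_union_right).trans hKC) ?_)
      intro p hp
      exact Set.disjoint_right.mp hC₀K₂ hp
    calc lamE K₁ + lamE K₂ ≤ ν (C ∩ C₀) + ν (C ∩ C₀ᶜ) := add_le_add h1 h2
      _ = ν ((C ∩ C₀) ∪ (C ∩ C₀ᶜ)) := (hν_add (hC.inter hC₀) (hC.inter hC₀.compl)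
          (Set.disjoint_left.mpr fun p hp hp' => hp'.2 hp.2)).symm
      _ = ν C := by rw [Set.inter_union_compl]
  set cont : Content α := ⟨lam, hmono, hsup_disjoint, hsup_le⟩ with hcontdef
  set μ₀ : Measure α := cont.measure with hμ₀def
  have hcont_clopen : ∀ (C : Set α) (hC : IsClopen C),
      (cont ⟨C, hC.isClosed.isCompact⟩ : ℝ≥0∞) = ν C := by
    intro C hC
    show ((lam ⟨C, hC.isClosed.isCompact⟩ : ℝ≥0) : ℝ≥0∞) = ν C
    rw [hcoe, hlamE_clopen C hC]
  have hμ₀clopen : ∀ (C : Set α), IsClopen C → μ₀ C = ν C := by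
    intro C hC
    rw [hμ₀def, Content.measure_apply _ hC.isOpen.measurableSet,
      Content.outerMeasure_of_isOpen _ C hC.isOpen]
    refine le_antisymm ?_ ?_
    · exact (cont.innerContent_le ⟨C, hC.isOpen⟩ ⟨C, hC.isClosed.isCompact⟩
        subset_rfl).trans_eq (hcont_clopen C hC)
    · exact (hcont_clopen C hC).symm.le.trans
        (cont.le_innerContent ⟨C, hC.isClosed.isCompact⟩ ⟨C, hC.isOpen⟩ subset_rfl)
  haveI hμ₀prob : IsProbabilityMeasure μ₀ :=
    ⟨by rw [hμ₀clopen Set.univ isClopen_univ, hν_univ]⟩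
  have hgen : (inferInstance : MeasurableSpace α) =
      MeasurableSpace.generateFrom {C : Set α | IsClopen C} := by
    rw [BorelSpace.measurable_eq (α := α)]
    exact isTopologicalBasis_isClopen.borel_eq_generateFrom
  have hpi : IsPiSystem {C : Set α | IsClopen C} := fun s hs t ht _ => hs.inter ht
  have hinv₀ : ∀ g : G, Measure.map (S g) μ₀ = μ₀ := by
    intro g
    haveI : IsProbabilityMeasure (Measure.map (S g) μ₀) :=
      Measure.isProbabilityMeasure_map ((hSc g).measurable.aemeasurable)
    refine ext_of_generate_finite _ hgen hpi ?_ ?_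
    · intro C hC
      have hpre : S g ⁻¹' C = S g⁻¹ '' C := by rw [himg g⁻¹ C, inv_inv]
      rw [Measure.map_apply (hSc g).measurable hC.isOpen.measurableSet, hpre,
        hμ₀clopen _ (hSclopen g⁻¹ hC), hν_inv g⁻¹ hC, ← hμ₀clopen C hC]
    · rw [Measure.map_apply (hSc g).measurable MeasurableSet.univ, Set.preimage_univ]
  exact hno ⟨μ₀, hμ₀prob, hinv₀⟩

/-- if a minimal system (Y,G) (G non-amenable) admits a minimal Cantor
almost 1-1 extension with no invariant measures, and a minimal subshift almost 1-1
extension, then it admits a minimal subshift almost 1-1 extension with no invariant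
measures. -/
theorem stmt_17 {G X Y : Type*} [Group G] [Countable G]
    (hNA : ¬ HasInvariantMeasuresAll G)
    [MetricSpace Y] [CompactSpace Y] [MulAction G Y]
    (hcY : ∀ g : G, Continuous fun y : Y => g • y)
    (hminY : ∀ y : Y, Dense (MulAction.orbit G y))
    -- (a) minimal Cantor almost 1-1 extension with no invariant measures
    [MetricSpace X] [CompactSpace X] [TotallyDisconnectedSpace X] [Nonempty X]
    [MeasurableSpace X] [BorelSpace X] [MulAction G X]
    (hperfX : ∀ x : X, ¬ IsOpen ({x} : Set X))
    (hcX : ∀ g : G, Continuous fun x : X => g • x)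
    (hminX : ∀ x : X, Dense (MulAction.orbit G x))
    (hnomeasX : ¬ ∃ μ : Measure X, IsProbabilityMeasure μ ∧
      ∀ g : G, Measure.map (fun x : X => g • x) μ = μ)
    (πX : X → Y) (hπXc : Continuous πX) (hπXs : Function.Surjective πX)
    (hπXe : ∀ (g : G) (x : X), πX (g • x) = g • πX x)
    (hπX11 : Dense {y : Y | ∃! x : X, πX x = y})
    -- (b) minimal subshift almost 1-1 extension
    (k : ℕ) (Z : Set (G → Fin (k + 1)))
    (hZcl : IsClosed Z) (hZinv : ∀ g : G, ∀ z ∈ Z, shiftAct g z ∈ Z)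
    (hZmin : ∀ z ∈ Z, Z ⊆ closure {w : G → Fin (k + 1) | ∃ g : G, w = shiftAct g z})
    (πZ : (G → Fin (k + 1)) → Y) (hπZc : ContinuousOn πZ Z)
    (hπZs : Set.SurjOn πZ Z Set.univ)
    (hπZe : ∀ g : G, ∀ z ∈ Z, πZ (shiftAct g z) = g • πZ z)
    (hπZ11 : Dense {y : Y | ∃! z : G → Fin (k + 1), z ∈ Z ∧ πZ z = y}) :
    -- conclusion: a minimal subshift extension of Y, almost 1-1, with no invariant
    -- probability measures
    ∃ (m : ℕ) (W : Set (G → Fin (m + 1))),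
      IsClosed W ∧ (∀ g : G, ∀ w ∈ W, shiftAct g w ∈ W) ∧ W.Nonempty ∧
      (∀ w ∈ W, W ⊆ closure {v : G → Fin (m + 1) | ∃ g : G, v = shiftAct g w}) ∧
      (¬ ∃ μ : Measure (G → Fin (m + 1)), IsProbabilityMeasure μ ∧ μ W = 1 ∧
        ∀ g : G, Measure.map (shiftAct g) μ = μ) ∧
      ∃ q : (G → Fin (m + 1)) → Y,
        ContinuousOn q W ∧ Set.SurjOn q W Set.univ ∧
        (∀ g : G, ∀ w ∈ W, q (shiftAct g w) = g • q w) ∧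
        Dense {y : Y | ∃! w : G → Fin (m + 1), w ∈ W ∧ q w = y} := by
  classical
  -- the ambient product system
  set S : G → X × (G → Fin (k + 1)) → X × (G → Fin (k + 1)) :=
    fun g p => (g • p.1, shiftAct g p.2) with hSdef
  have hScont : ∀ g : G, Continuous (S g) := fun g =>
    ((hcX g).comp continuous_fst).prodMk ((continuous_shiftAct g).comp continuous_snd)
  have hS1 : ∀ p, S (1 : G) p = p := by
    intro p
    simp only [hSdef, one_smul, shiftAct_one]
  have hSm : ∀ g h p, S (g * h) p = S g (S h p) := by
    intro g h p
    simp only [hSdef, mul_smul, shiftAct_mul]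
  -- minimality of X at the level of sets
  have hXminset : ∀ s : Set X, IsClosed s → s.Nonempty →
      (∀ g : G, ∀ x ∈ s, g • x ∈ s) → s = Set.univ := by
    intro s hcl hne hinv
    obtain ⟨x, hx⟩ := hne
    have horb : MulAction.orbit G x ⊆ s := by
      rintro - ⟨g, rfl⟩
      exact hinv g x hx
    have h1 : closure (MulAction.orbit G x) ⊆ s := closure_minimal horb hcl
    rw [(hminX x).closure_eq] at h1
    exact Set.eq_univ_of_univ_subset h1
  -- the fiber product
  set Xt : Set (X × (G → Fin (k + 1))) := {p | p.2 ∈ Z ∧ πX p.1 = πZ p.2} with hXtdef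
  have hXtcl : IsClosed Xt := by
    have h2 : ContinuousOn (fun p : X × (G → Fin (k + 1)) => (πX p.1, πZ p.2))
        (Set.univ ×ˢ Z) :=
      ((hπXc.comp continuous_fst).continuousOn).prodMk
        (hπZc.comp continuous_snd.continuousOn fun p hp => hp.2)
    have h3 := h2.preimage_isClosed_of_isClosed (isClosed_univ.prod hZcl) isClosed_diagonal
    have h4 : Xt = (Set.univ ×ˢ Z) ∩
        (fun p : X × (G → Fin (k + 1)) => (πX p.1, πZ p.2)) ⁻¹' (Set.diagonal Y) := by
      ext p
      simp only [hXtdef, Set.mem_setOf_eq, Set.mem_inter_iff, Set.mem_prod, Set.mem_preimage,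
        Set.mem_diagonal_iff, Set.mem_univ, true_and]
    rw [h4]
    exact h3
  have hXtne : Xt.Nonempty := by
    obtain ⟨x0⟩ := ‹Nonempty X›
    obtain ⟨z, hzZ, hzy⟩ := hπZs (Set.mem_univ (πX x0))
    exact ⟨(x0, z), hzZ, hzy.symm⟩
  have hXtinv : ∀ g, ∀ p ∈ Xt, S g p ∈ Xt := by
    rintro g p ⟨hp1, hp2⟩
    refine ⟨hZinv g p.2 hp1, ?_⟩
    show πX (g • p.1) = πZ (shiftAct g p.2)
    rw [hπXe, hπZe g p.2 hp1, hp2]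
  obtain ⟨M, hMXt, hMcl, hMne, hMinv, hMmin⟩ :=
    exists_minimal_closed_invariant S Xt hXtcl hXtne hXtinv
  have hMcpt : IsCompact M := hMcl.isCompact
  -- M surjects onto X
  have hMproj : Prod.fst '' M = Set.univ := by
    refine hXminset _ (hMcpt.image continuous_fst).isClosed (hMne.image _) ?_
    rintro g - ⟨p, hp, rfl⟩
    exact ⟨S g p, hMinv g p hp, rfl⟩
  -- M is minimal: every point has dense orbit in M
  have horbM : ∀ p ∈ M, M ⊆ closure {q | ∃ g : G, q = S g p} := by
    intro p hp
    have hsub : {q | ∃ g : G, q = S g p} ⊆ M := by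
      rintro - ⟨g, rfl⟩
      exact hMinv g p hp
    have hclsub : closure {q | ∃ g : G, q = S g p} ⊆ M := closure_minimal hsub hMcl
    have := hMmin (closure {q | ∃ g : G, q = S g p}) hclsub isClosed_closure
      ⟨p, subset_closure ⟨1, (hS1 p).symm⟩⟩ ?_
    · rw [this]
    · intro g q hq
      have h6 : S g '' {q | ∃ g : G, q = S g p} ⊆ {q | ∃ g : G, q = S g p} := by
        rintro - ⟨-, ⟨h, rfl⟩, rfl⟩
        exact ⟨g * h, (hSm g h p).symm⟩
      exact closure_mono h6 (image_closure_subset_closure_image (hScont g) ⟨q, hq, rfl⟩)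
  -- set up the subtype ↥M as a topological dynamical system
  haveI : CompactSpace ↥M := isCompact_iff_compactSpace.mp hMcpt
  haveI : Nonempty ↥M := hMne.to_subtype
  letI : MeasurableSpace ↥M := borel ↥M
  haveI : BorelSpace ↥M := ⟨rfl⟩
  set σ : G → ↥M → ↥M := fun g p => ⟨S g p.1, hMinv g p.1 p.2⟩ with hσdef
  have hσc : ∀ g, Continuous (σ g) :=
    fun g => ((hScont g).comp continuous_subtype_val).subtype_mk _
  have hσ1 : ∀ p : ↥M, σ 1 p = p := fun p => Subtype.ext (hS1 p.1)
  have hσm : ∀ (g h : G) (p : ↥M), σ (g * h) p = σ g (σ h p) :=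
    fun g h p => Subtype.ext (hSm g h p.1)
  set z0 : ↥M → Fin (k + 1) := fun p => p.1.2 1 with hz0def
  have hz0c : Continuous z0 :=
    (continuous_apply (1 : G)).comp (continuous_snd.comp continuous_subtype_val)
  -- ↥M has no invariant measures (else push forward to X)
  have hno : ¬ ∃ μ : Measure ↥M, IsProbabilityMeasure μ ∧
      ∀ g : G, Measure.map (σ g) μ = μ := by
    rintro ⟨μ, hprob, hinv⟩
    apply hnomeasX
    have hmeas1 : Measurable (fun p : ↥M => p.1.1) :=
      (continuous_fst.comp continuous_subtype_val).measurable
    refine ⟨Measure.map (fun p : ↥M => p.1.1) μ,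
      Measure.isProbabilityMeasure_map hmeas1.aemeasurable, ?_⟩
    intro g
    rw [Measure.map_map (hcX g).measurable hmeas1]
    have hcomm : ((fun x : X => g • x) ∘ fun p : ↥M => p.1.1) =
        (fun p : ↥M => p.1.1) ∘ σ g := rfl
    rw [hcomm, ← Measure.map_map hmeas1 (hσc g).measurable, hinv g]
  -- the key coloring
  obtain ⟨c, hcno⟩ := exists_col_no_invariant_measure σ hσc hσ1 hσm k z0 hz0c hno
  have hΦc : Continuous (fun p (h : G) => c.f (σ h⁻¹ p)) :=
    continuous_pi fun h => c.cont.comp (hσc h⁻¹)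
  -- equivariance of the coding map
  have hequi : ∀ (g : G) (p : ↥M),
      shiftAct g ((fun p (h : G) => c.f (σ h⁻¹ p)) p) =
      (fun p (h : G) => c.f (σ h⁻¹ p)) (σ g p) := by
    intro g p
    funext h
    show c.f (σ (g⁻¹ * h)⁻¹ p) = c.f (σ h⁻¹ (σ g p))
    rw [← hσm]
    congr 1
    rw [mul_inv_rev, inv_inv]
  -- the z-coordinate can be read off from the coding
  have hρ : ∀ p : ↥M, (fun h => c.r ((fun p (h : G) => c.f (σ h⁻¹ p)) p h)) = p.1.2 := by
    intro p
    funext h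
    show c.r (c.f (σ h⁻¹ p)) = p.1.2 h
    rw [← c.hr (σ h⁻¹ p)]
    show (shiftAct h⁻¹ p.1.2) 1 = p.1.2 h
    simp [shiftAct]
  have hMZ : ∀ p : ↥M, p.1.2 ∈ Z := fun p => (hMXt p.2).1
  have hMeq : ∀ p : ↥M, πX p.1.1 = πZ p.1.2 := fun p => (hMXt p.2).2
  refine ⟨c.m, Set.range (fun p (h : G) => c.f (σ h⁻¹ p)),
    (isCompact_range hΦc).isClosed, ?_, Set.range_nonempty _, ?_, hcno,
    fun w => πZ (fun h => c.r (w h)), ?_, ?_, ?_, ?_⟩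
  · -- invariance
    rintro g - ⟨p, rfl⟩
    rw [hequi g p]
    exact ⟨σ g p, rfl⟩
  · -- minimality
    rintro - ⟨p, rfl⟩ - ⟨p', rfl⟩
    have hp' : (p' : X × (G → Fin (k + 1))) ∈ closure {q | ∃ g : G, q = S g p.1} :=
      horbM p.1 p.2 p'.2
    have hp'2 : p' ∈ closure {q : ↥M | ∃ g : G, q = σ g p} := by
      rw [closure_subtype]
      convert hp' using 2
      ext q
      constructor
      · rintro ⟨-, ⟨g, rfl⟩, rfl⟩
        exact ⟨g, rfl⟩
      · rintro ⟨g, rfl⟩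
        exact ⟨σ g p, ⟨g, rfl⟩, rfl⟩
    have himg2 : (fun p (h : G) => c.f (σ h⁻¹ p)) '' {q : ↥M | ∃ g : G, q = σ g p} ⊆
        {v | ∃ g : G, v = shiftAct g ((fun p (h : G) => c.f (σ h⁻¹ p)) p)} := by
      rintro - ⟨-, ⟨g, rfl⟩, rfl⟩
      exact ⟨g, (hequi g p).symm⟩
    exact closure_mono himg2 (image_closure_subset_closure_image hΦc ⟨p', hp'2, rfl⟩)
  · -- continuity of q on W
    have hρc : Continuous (fun w : G → Fin (c.m + 1) => fun h : G => c.r (w h)) :=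
      continuous_pi fun h => continuous_of_discreteTopology.comp (continuous_apply h)
    have hmaps : Set.MapsTo (fun w : G → Fin (c.m + 1) => fun h : G => c.r (w h))
        (Set.range (fun p (h : G) => c.f (σ h⁻¹ p))) Z := by
      rintro - ⟨p, rfl⟩
      show (fun h : G => c.r ((fun p (h : G) => c.f (σ h⁻¹ p)) p h)) ∈ Z
      rw [hρ p]
      exact hMZ p
    exact hπZc.comp hρc.continuousOn hmaps
  · -- surjectivity onto Y
    intro y _
    obtain ⟨x, hx⟩ := hπXs y
    have hxM : x ∈ Prod.fst '' M := hMproj ▸ Set.mem_univ x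
    obtain ⟨p0, hp0M, hp0x⟩ := hxM
    refine ⟨(fun p (h : G) => c.f (σ h⁻¹ p)) ⟨p0, hp0M⟩, ⟨⟨p0, hp0M⟩, rfl⟩, ?_⟩
    show πZ (fun h => c.r (c.f (σ h⁻¹ ⟨p0, hp0M⟩))) = y
    rw [show (fun h : G => c.r (c.f (σ h⁻¹ (⟨p0, hp0M⟩ : ↥M)))) = p0.2 from hρ ⟨p0, hp0M⟩]
    rw [← hMeq ⟨p0, hp0M⟩]
    show πX p0.1 = y
    rw [hp0x, hx]
  · -- equivariance of q
    rintro g - ⟨p, rfl⟩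
    rw [hequi g p]
    show πZ (fun h => c.r (c.f (σ h⁻¹ (σ g p)))) = g • πZ (fun h => c.r (c.f (σ h⁻¹ p)))
    rw [show (fun h : G => c.r (c.f (σ h⁻¹ (σ g p)))) = (σ g p).1.2 from hρ (σ g p),
      show (fun h : G => c.r (c.f (σ h⁻¹ p))) = p.1.2 from hρ p]
    show πZ (shiftAct g p.1.2) = g • πZ p.1.2
    exact hπZe g p.1.2 (hMZ p)
  · -- dense set of points with unique fiber
    have hq : ∀ p : ↥M, πZ (fun h => c.r ((fun p (h : G) => c.f (σ h⁻¹ p)) p h)) = πZ p.1.2 :=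
      fun p => by rw [hρ p]
    have hgX : IsGδ {y : Y | ∃! x : X, πX x = y} := by
      have h := isGδ_unique_preimage (K := (Set.univ : Set X)) isCompact_univ
        hπXc.continuousOn (fun y => (hπXs y).imp fun x hx => ⟨Set.mem_univ x, hx⟩)
      convert h using 1
      ext y
      exact existsUnique_congr fun x => by simp
    have hgZ : IsGδ {y : Y | ∃! z : G → Fin (k + 1), z ∈ Z ∧ πZ z = y} :=
      isGδ_unique_preimage hZcl.isCompact hπZc fun y => by
        obtain ⟨z, hz, hzy⟩ := hπZs (Set.mem_univ y)
        exact ⟨z, hz, hzy⟩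
    have hDd : Dense ({y : Y | ∃! x : X, πX x = y} ∩
        {y : Y | ∃! z : G → Fin (k + 1), z ∈ Z ∧ πZ z = y}) :=
      hπX11.inter_of_Gδ hgX hgZ hπZ11
    refine hDd.mono ?_
    rintro y ⟨hyX, hyZ⟩
    have huniq : ∀ p : ↥M, πZ p.1.2 = y → ∀ p' : ↥M, πZ p'.1.2 = y → p = p' := by
      intro p hp p' hp'
      have hz : p.1.2 = p'.1.2 := hyZ.unique ⟨hMZ p, hp⟩ ⟨hMZ p', hp'⟩
      have hx : p.1.1 = p'.1.1 :=
        hyX.unique ((hMeq p).trans hp) ((hMeq p').trans hp')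
      exact Subtype.ext (Prod.ext hx hz)
    obtain ⟨x, hxy⟩ := hπXs y
    have hxM : x ∈ Prod.fst '' M := hMproj ▸ Set.mem_univ x
    obtain ⟨p0, hp0M, hp0x⟩ := hxM
    have hp0y : πZ (⟨p0, hp0M⟩ : ↥M).1.2 = y := by
      rw [← hMeq ⟨p0, hp0M⟩]
      show πX p0.1 = y
      rw [hp0x, hxy]
    refine ⟨(fun p (h : G) => c.f (σ h⁻¹ p)) ⟨p0, hp0M⟩, ⟨⟨⟨p0, hp0M⟩, rfl⟩, ?_⟩, ?_⟩
    · exact (hq ⟨p0, hp0M⟩).trans hp0y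
    · rintro - ⟨⟨p, rfl⟩, hpy⟩
      have hpy' : πZ (p : X × (G → Fin (k + 1))).2 = y := (hq p).symm.trans hpy
      exact congrArg (fun q : ↥M => fun h : G => c.f (σ h⁻¹ q)) (huniq p hpy' ⟨p0, hp0M⟩ hp0y)
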